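/- arXiv:1802.06342 — 9 statements merged into one kernel-verified Lean document; each statement's English description precedes it below -/
import Mathlib

section
/- Let X be a uniform space and let Φ be an action of a finitely generated group G on X. If Φ has shadowing with respect to one generating set S of G, then Φ has shadowing with respect to any other generating set T of G. -/
open Set MeasureTheory TopologicalSpace

/-- An action of a group `G` on a uniform space `X` by uniform equivalences. -/
structure UAction (G : Type*) [Group G] (X : Type*) [UniformSpace X] where
  act : G → X ≃ᵤ X
  act_one : ∀ x : X, act 1 x = x
  act_mul : ∀ g h : G, ∀ x : X, act (g * h) x = act g (act h x)

section Defs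

variable {G : Type*} [Group G] {X : Type*} [UniformSpace X]
variable {Y : Type*} [UniformSpace Y]

/-- A finite symmetric generating set of `G`. -/
def IsGenSet {G : Type*} [Group G] (S : Set G) : Prop :=
  S.Finite ∧ (∀ s ∈ S, s⁻¹ ∈ S) ∧ Subgroup.closure S = ⊤

/-- `{x_g}` is a `D`-pseudo orbit for `Φ` with respect to the generating set `S`. -/
def IsPseudoOrbit (Φ : UAction G X) (S : Set G) (D : Set (X × X)) (x : G → X) : Prop :=
  ∀ s ∈ S, ∀ g : G, (x (s * g), Φ.act s (x g)) ∈ D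

/-- `{x_g}` is `E`-shadowed by the point `p`. -/
def IsShadowedBy (Φ : UAction G X) (E : Set (X × X)) (x : G → X) (p : X) : Prop :=
  ∀ g : G, (x g, Φ.act g p) ∈ E

/-- `Φ` has shadowing with respect to the generating set `S`. -/
def HasShadowingWrt (Φ : UAction G X) (S : Set G) : Prop :=
  ∀ E ∈ uniformity X, ∃ D ∈ uniformity X,
    ∀ x : G → X, IsPseudoOrbit Φ S D x → ∃ p : X, IsShadowedBy Φ E x p

/-- `Φ` is topologically stable with respect to the generating set `S`. -/
def TopStableWrt (Φ : UAction G X) (S : Set G) : Prop :=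
  ∀ E ∈ uniformity X, ∃ D ∈ uniformity X,
    ∀ Ψ : UAction G X, (∀ s ∈ S, ∀ x : X, (Ψ.act s x, Φ.act s x) ∈ D) →
      ∃ f : X → X, Continuous f ∧ (∀ (g : G) (x : X), Φ.act g (f x) = f (Ψ.act g x)) ∧
        ∀ x : X, (x, f x) ∈ E

/-- `Φ` is persistent with respect to the generating set `S`. -/
def PersistentWrt (Φ : UAction G X) (S : Set G) : Prop :=
  ∀ E ∈ uniformity X, ∃ D ∈ uniformity X,
    ∀ Ψ : UAction G X, (∀ s ∈ S, ∀ x : X, (Ψ.act s x, Φ.act s x) ∈ D) →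
      ∀ x : X, ∃ y : X, ∀ g : G, (Ψ.act g x, Φ.act g y) ∈ E

/-- `Φ` has `μ`-shadowing with respect to the generating set `S`. -/
def MuShadowingWrt [MeasurableSpace X] (μ : Measure X) (Φ : UAction G X) (S : Set G) : Prop :=
  ∀ E ∈ uniformity X, ∃ D ∈ uniformity X, ∃ B : Set X, MeasurableSet B ∧ μ Bᶜ = 0 ∧
    ∀ x : G → X, IsPseudoOrbit Φ S D x → x 1 ∈ B → ∃ p : X, IsShadowedBy Φ E x p

/-- `Φ` is `μ`-persistent with respect to the generating set `S`. -/
def MuPersistentWrt [MeasurableSpace X] (μ : Measure X) (Φ : UAction G X) (S : Set G) : Prop :=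
  ∀ E ∈ uniformity X, ∃ D ∈ uniformity X, ∃ B : Set X, MeasurableSet B ∧ μ Bᶜ = 0 ∧
    ∀ Ψ : UAction G X, (∀ s ∈ S, ∀ x : X, (Ψ.act s x, Φ.act s x) ∈ D) →
      ∀ x ∈ B, ∃ y : X, ∀ g : G, (Ψ.act g x, Φ.act g y) ∈ E

/-- Upper semi-continuity of a set-valued map: for every `x` in the domain and every open
neighborhood `O` of `H x` there is an entourage `D` with `H y ⊆ O` whenever `(x, y) ∈ D`. -/
def UpperSemiCont (H : X → Set X) : Prop :=
  ∀ x : X, (H x).Nonempty → ∀ O : Set X, IsOpen O → H x ⊆ O →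
    ∃ D ∈ uniformity X, ∀ y : X, (x, y) ∈ D → H y ⊆ O

/-- `Φ` is `μ`-topologically stable with respect to the generating set `S`. -/
def MuTopStableWrt [MeasurableSpace X] (μ : Measure X) (Φ : UAction G X) (S : Set G) : Prop :=
  ∀ E ∈ uniformity X, ∃ D ∈ uniformity X,
    ∀ Ψ : UAction G X, (∀ s ∈ S, ∀ x : X, (Ψ.act s x, Φ.act s x) ∈ D) →
      ∃ H : X → Set X, UpperSemiCont H ∧ (∀ x : X, IsCompact (H x)) ∧
        MeasurableSet {x : X | (H x).Nonempty} ∧ μ {x : X | (H x).Nonempty}ᶜ = 0 ∧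
        (∀ x : X, μ (H x) = 0) ∧ (∀ x : X, ∀ y ∈ H x, (x, y) ∈ E) ∧
        (∀ (g : G) (x : X), Φ.act g '' H x = H (Ψ.act g x))

/-- `D` is an expansive entourage for `Φ`. -/
def IsExpansiveEnt (Φ : UAction G X) (D : Set (X × X)) : Prop :=
  D ∈ uniformity X ∧ IsClosed D ∧
    ∀ x y : X, x ≠ y → ∃ g : G, (Φ.act g x, Φ.act g y) ∉ D

/-- `Φ` is expansive. -/
def Expansive (Φ : UAction G X) : Prop :=
  ∃ D : Set (X × X), IsExpansiveEnt Φ D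

/-- The set `Γ_D(x)` of points whose `Φ`-orbit stays `D`-close to the orbit of `x`. -/
def GammaSet (Φ : UAction G X) (D : Set (X × X)) (x : X) : Set X :=
  {y : X | ∀ g : G, (Φ.act g x, Φ.act g y) ∈ D}

/-- `D` is a `μ`-expansive entourage for `Φ`. -/
def IsMuExpansiveEnt [MeasurableSpace X] (μ : Measure X) (Φ : UAction G X)
    (D : Set (X × X)) : Prop :=
  D ∈ uniformity X ∧ IsClosed D ∧ ∀ x : X, μ (GammaSet Φ D x) = 0

/-- `Φ` is `μ`-expansive. -/
def MuExpansive [MeasurableSpace X] (μ : Measure X) (Φ : UAction G X) : Prop :=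
  ∃ D : Set (X × X), IsMuExpansiveEnt μ Φ D

/-- An entourage `M` is proper if `M[K]` is compact for every compact `K`. -/
def ProperEnt (M : Set (X × X)) : Prop :=
  ∀ K : Set X, IsCompact K → IsCompact {y : X | ∃ x ∈ K, (x, y) ∈ M}

/-- An entourage `U` is wide if `U ∪ (K × X) = X × X` for some compact `K`. -/
def WideEnt (U : Set (X × X)) : Prop :=
  ∃ K : Set X, IsCompact K ∧ U ∪ (K ×ˢ (univ : Set X)) = univ

/-- `Φ` and `Ψ` are uniformly conjugate via a uniform equivalence `h`. -/
def UniformlyConjugate (Φ : UAction G X) (Ψ : UAction G Y) : Prop :=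
  ∃ h : X ≃ᵤ Y, ∀ (g : G) (x : X), h (Φ.act g x) = Ψ.act g (h x)

end Defs


private lemma mem_submonoid_closure_of_symm {G : Type*} [Group G] {T : Set G}
    (hsym : ∀ t ∈ T, t⁻¹ ∈ T) {s : G} (hs : s ∈ Subgroup.closure T) :
    s ∈ Submonoid.closure T := by
  induction hs using Subgroup.closure_induction with
  | mem x hx => exact Submonoid.subset_closure hx
  | one => exact one_mem _
  | mul x y _ _ hx hy => exact mul_mem hx hy
  | inv x hmem hx =>
    clear hmem
    induction hx using Submonoid.closure_induction with
    | mem t ht => exact Submonoid.subset_closure (hsym t ht)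
    | one => simpa using one_mem (Submonoid.closure T)
    | mul a b _ _ ha hb => rw [mul_inv_rev]; exact mul_mem hb ha

private lemma key_lemma {G : Type*} [Group G] {X : Type*} [UniformSpace X]
    (Φ : UAction G X) (T : Set G) (hTfin : T.Finite) :
    ∀ n : ℕ, ∀ V ∈ uniformity X, ∃ W ∈ uniformity X,
      ∀ x : G → X, IsPseudoOrbit Φ T W x →
        ∀ l : List G, (∀ t ∈ l, t ∈ T) → l.length ≤ n →
          ∀ g : G, (x (l.prod * g), Φ.act l.prod (x g)) ∈ V := by
  intro n
  induction n with
  | zero =>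
    intro V hV
    refine ⟨V, hV, fun x _ l _ hlen g => ?_⟩
    have : l = [] := List.eq_nil_of_length_eq_zero (Nat.le_zero.mp hlen)
    subst this
    simp only [List.prod_nil, one_mul, Φ.act_one]
    exact refl_mem_uniformity hV
  | succ n ih =>
    intro V hV
    obtain ⟨V₂, hV₂, hV₂comp⟩ := comp_mem_uniformity_sets hV
    set V₃ : Set (X × X) :=
      V₂ ∩ ⋂ t ∈ T, (fun p : X × X => (Φ.act t p.1, Φ.act t p.2)) ⁻¹' V₂ with hV₃def
    have hV₃ : V₃ ∈ uniformity X := by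
      refine Filter.inter_mem hV₂ ?_
      rw [Filter.biInter_mem hTfin]
      intro t ht
      exact (Φ.act t).uniformContinuous hV₂
    obtain ⟨W, hW, hWprop⟩ := ih V₃ hV₃
    refine ⟨W ∩ V₃, Filter.inter_mem hW hV₃, fun x hx l hl hlen g => ?_⟩
    have hxW : IsPseudoOrbit Φ T W x := fun s hs g' => (hx s hs g').1
    match l with
    | [] =>
      simp only [List.prod_nil, one_mul, Φ.act_one]
      exact refl_mem_uniformity hV
    | t :: l' =>
      have ht : t ∈ T := hl t (List.mem_cons_self (a := t) (l := l'))
      have hl' : ∀ u ∈ l', u ∈ T := fun u hu => hl u (List.mem_cons_of_mem t hu)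
      have hlen' : l'.length ≤ n := Nat.succ_le_succ_iff.mp (by simpa using hlen)
      have step1 : (x (t * (l'.prod * g)), Φ.act t (x (l'.prod * g))) ∈ V₂ :=
        ((hx t ht (l'.prod * g)).2).1
      have step2 : (x (l'.prod * g), Φ.act l'.prod (x g)) ∈ V₃ :=
        hWprop x hxW l' hl' hlen' g
      have step2' : (Φ.act t (x (l'.prod * g)), Φ.act t (Φ.act l'.prod (x g))) ∈ V₂ := by
        have := step2.2
        simp only [Set.mem_iInter] at this
        exact this t ht
      have hcomp : (x (t * (l'.prod * g)), Φ.act t (Φ.act l'.prod (x g))) ∈ V :=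
        hV₂comp ⟨_, step1, step2'⟩
      simpa only [List.prod_cons, mul_assoc, Φ.act_mul] using hcomp

/-- Shadowing is independent of the choice of finite symmetric generating set. -/
theorem shadowing_indep_genSet {G : Type*} [Group G] {X : Type*} [UniformSpace X]
    (Φ : UAction G X) (S T : Set G) (hS : IsGenSet S) (hT : IsGenSet T)
    (h : HasShadowingWrt Φ S) : HasShadowingWrt Φ T := by
  intro E hE
  obtain ⟨D, hD, hDshad⟩ := h E hE
  classical
  have hword : ∀ s ∈ S, ∃ l : List G, (∀ t ∈ l, t ∈ T) ∧ l.prod = s := by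
    intro s hs
    have hs' : s ∈ Subgroup.closure T := by rw [hT.2.2]; trivial
    exact Submonoid.exists_list_of_mem_closure
      (mem_submonoid_closure_of_symm hT.2.1 hs')
  set w : G → List G := fun s =>
    if hws : ∃ l : List G, (∀ t ∈ l, t ∈ T) ∧ l.prod = s then hws.choose else [] with hwdef
  have hwspec : ∀ s ∈ S, (∀ t ∈ w s, t ∈ T) ∧ (w s).prod = s := by
    intro s hs
    have hws := hword s hs
    simp only [hwdef, dif_pos hws]
    exact hws.choose_spec
  set N : ℕ := hS.1.toFinset.sup (fun s => (w s).length) with hNdef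
  obtain ⟨W, hW, hWprop⟩ := key_lemma Φ T hT.1 N D hD
  refine ⟨W, hW, fun x hx => ?_⟩
  refine hDshad x ?_
  intro s hs g
  obtain ⟨hwT, hwprod⟩ := hwspec s hs
  have hlen : (w s).length ≤ N :=
    Finset.le_sup (f := fun s => (w s).length) (hS.1.mem_toFinset.mpr hs)
  have := hWprop x hx (w s) hwT hlen g
  rwa [hwprod] at this
end

section
/- Let X be a uniform space and let Φ be an action of a finitely generated group G on X. If Φ is topologically stable with respect to one generating set S of G, then Φ is topologically stable with respect to any other generating set T of G. -/
open Set MeasureTheory TopologicalSpace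

/-- Topological stability is independent of the choice of finite symmetric generating set. -/
theorem topStable_indep_genSet {G : Type*} [Group G] {X : Type*} [UniformSpace X]
    (Φ : UAction G X) (S T : Set G) (hS : IsGenSet S) (hT : IsGenSet T)
    (h : TopStableWrt Φ S) : TopStableWrt Φ T := by
  intro E hE
  obtain ⟨D, hD, hDspec⟩ := h E hE
  -- Key: closeness on T propagates to any element of G
  have key : ∀ g : G, ∀ D ∈ uniformity X, ∃ D' ∈ uniformity X,
      ∀ Ψ : UAction G X, (∀ t ∈ T, ∀ x : X, (Ψ.act t x, Φ.act t x) ∈ D') →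
        ∀ x : X, (Ψ.act g x, Φ.act g x) ∈ D := by
    intro g
    have hgmem : g ∈ Submonoid.closure T := by
      have h1 : g ∈ (Subgroup.closure T).toSubmonoid := by
        rw [hT.2.2]; trivial
      rw [Subgroup.closure_toSubmonoid] at h1
      have h2 : Submonoid.closure (T ∪ T⁻¹) ≤ Submonoid.closure T := by
        apply Submonoid.closure_le.2
        intro x hx
        rcases hx with hx | hx
        · exact Submonoid.subset_closure hx
        · exact Submonoid.subset_closure (by simpa using hT.2.1 _ hx)
      exact h2 h1
    induction hgmem using Submonoid.closure_induction with
    | mem t ht =>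
      intro D hD
      exact ⟨D, hD, fun Ψ hΨ x => hΨ t ht x⟩
    | one =>
      intro D hD
      refine ⟨D, hD, fun Ψ hΨ x => ?_⟩
      rw [Ψ.act_one, Φ.act_one]
      exact refl_mem_uniformity hD
    | mul a b _ _ iha ihb =>
      intro D hD
      obtain ⟨D₂, hD₂, hD₂comp⟩ := comp_mem_uniformity_sets hD
      obtain ⟨Da, hDa, hDaspec⟩ := iha D₂ hD₂
      have hcont : {p : X × X | (Φ.act a p.1, Φ.act a p.2) ∈ D₂} ∈ uniformity X :=
        (Φ.act a).uniformContinuous hD₂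
      obtain ⟨Db, hDb, hDbspec⟩ := ihb _ hcont
      refine ⟨Da ∩ Db, Filter.inter_mem hDa hDb, fun Ψ hΨ x => ?_⟩
      have hΨa : ∀ t ∈ T, ∀ x : X, (Ψ.act t x, Φ.act t x) ∈ Da :=
        fun t ht x => (hΨ t ht x).1
      have hΨb : ∀ t ∈ T, ∀ x : X, (Ψ.act t x, Φ.act t x) ∈ Db :=
        fun t ht x => (hΨ t ht x).2
      rw [Ψ.act_mul, Φ.act_mul]
      have h1 : (Ψ.act a (Ψ.act b x), Φ.act a (Ψ.act b x)) ∈ D₂ := hDaspec Ψ hΨa _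
      have h2 : (Φ.act a (Ψ.act b x), Φ.act a (Φ.act b x)) ∈ D₂ :=
        hDbspec Ψ hΨb x
      exact hD₂comp ⟨_, h1, h2⟩
  -- combine over the finite set S
  choose D' hD' hspec using fun s => key s D hD
  refine ⟨⋂ s ∈ S, D' s, (Filter.biInter_mem hS.1).2 fun s _ => hD' s, fun Ψ hΨ => ?_⟩
  apply hDspec Ψ
  intro s hs x
  apply hspec s Ψ
  intro t ht y
  have := hΨ t ht y
  exact Set.mem_iInter₂.1 this s hs
end

section
/- Let X be a uniform space and let Φ be an action of a finitely generated group G on X. If Φ is persistent with respect to one generating set S of G, then Φ is persistent with respect to any other generating set T of G. -/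
open Set MeasureTheory TopologicalSpace

/-- Key approximation lemma: closeness of two actions on a finite set `T` of generators
propagates (with a suitably small entourage) to all words of bounded length in `T`. -/
lemma persistent_word_approx {G : Type*} [Group G] {X : Type*} [UniformSpace X]
    (Φ : UAction G X) (T : Set G) (hTfin : T.Finite) :
    ∀ (k : ℕ) (D : Set (X × X)), D ∈ uniformity X → ∃ P ∈ uniformity X, P ⊆ D ∧
      ∀ Ψ : UAction G X, (∀ t ∈ T, ∀ x : X, (Ψ.act t x, Φ.act t x) ∈ P) →
        ∀ l : List G, (∀ g ∈ l, g ∈ T) → l.length ≤ k →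
          ∀ x : X, (Ψ.act l.prod x, Φ.act l.prod x) ∈ D := by
  intro k
  induction k with
  | zero =>
    intro D hD
    refine ⟨D, hD, subset_rfl, fun Ψ _ l _ hlen x => ?_⟩
    have : l = [] := List.length_eq_zero_iff.mp (Nat.le_zero.mp hlen)
    subst this
    simp only [List.prod_nil, Ψ.act_one, Φ.act_one]
    exact refl_mem_uniformity hD
  | succ k ih =>
    intro D hD
    obtain ⟨D₁, hD₁, hD₁comp⟩ := comp_mem_uniformity_sets hD
    set D₂ : Set (X × X) :=
      D₁ ∩ ⋂ t ∈ T, (fun p : X × X => (Φ.act t p.1, Φ.act t p.2)) ⁻¹' D₁ with hD₂def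
    have hD₂ : D₂ ∈ uniformity X := by
      refine Filter.inter_mem hD₁ ?_
      rw [Filter.biInter_mem hTfin]
      intro t _
      exact (Φ.act t).uniformContinuous hD₁
    obtain ⟨P', hP', hP'sub, hP'prop⟩ := ih D₂ hD₂
    refine ⟨P' ∩ D₁, Filter.inter_mem hP' hD₁,
      (Set.inter_subset_right).trans (fun p hp => hD₁comp ⟨p.1, refl_mem_uniformity hD₁, hp⟩),
      fun Ψ hΨ l hl hlen x => ?_⟩
    have hΨ' : ∀ t ∈ T, ∀ x : X, (Ψ.act t x, Φ.act t x) ∈ P' :=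
      fun t ht x => (hΨ t ht x).1
    cases l with
    | nil =>
      simp only [List.prod_nil, Ψ.act_one, Φ.act_one]
      exact refl_mem_uniformity hD
    | cons t l' =>
      have ht : t ∈ T := hl t List.mem_cons_self
      have hl' : ∀ g ∈ l', g ∈ T := fun g hg => hl g (List.mem_cons_of_mem t hg)
      have hlen' : l'.length ≤ k := Nat.succ_le_succ_iff.mp (by simpa using hlen)
      have hIH := hP'prop Ψ hΨ' l' hl' hlen' x
      set y := Ψ.act l'.prod x with hy
      have h1 : (Ψ.act t y, Φ.act t y) ∈ D₁ := (hΨ t ht y).2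
      have h2 : (Φ.act t y, Φ.act t (Φ.act l'.prod x)) ∈ D₁ := by
        have := hIH.2
        have hmem : (y, Φ.act l'.prod x) ∈
            (fun p : X × X => (Φ.act t p.1, Φ.act t p.2)) ⁻¹' D₁ := by
          have := Set.mem_iInter₂.mp hIH.2 t ht
          exact this
        exact hmem
      have hcomp : (Ψ.act t y, Φ.act t (Φ.act l'.prod x)) ∈ D :=
        hD₁comp ⟨Φ.act t y, h1, h2⟩
      simpa only [List.prod_cons, Ψ.act_mul, Φ.act_mul] using hcomp

/-- Persistence is independent of the choice of finite symmetric generating set. -/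
theorem persistent_indep_genSet {G : Type*} [Group G] {X : Type*} [UniformSpace X]
    (Φ : UAction G X) (S T : Set G) (hS : IsGenSet S) (hT : IsGenSet T)
    (h : PersistentWrt Φ S) : PersistentWrt Φ T := by
  classical
  intro E hE
  obtain ⟨D, hD, hDprop⟩ := h E hE
  have hword : ∀ s ∈ S, ∃ l : List G, (∀ g ∈ l, g ∈ T) ∧ l.prod = s := by
    intro s _
    have hs' : s ∈ Subgroup.closure T := by rw [hT.2.2]; trivial
    have hs'' : s ∈ (Subgroup.closure T).toSubmonoid := hs'
    rw [Subgroup.closure_toSubmonoid] at hs''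
    obtain ⟨l, hl, hprod⟩ := Submonoid.exists_list_of_mem_closure hs''
    refine ⟨l, fun g hg => ?_, hprod⟩
    rcases hl g hg with h1 | h1
    · exact h1
    · have := hT.2.1 g⁻¹ h1
      simpa using this
  set f : G → ℕ := fun s =>
    if hx : ∃ l : List G, (∀ g ∈ l, g ∈ T) ∧ l.prod = s then hx.choose.length else 0 with hf
  set N : ℕ := hS.1.toFinset.sup f with hN
  obtain ⟨P, hP, _, hPprop⟩ := persistent_word_approx Φ T hT.1 N D hD
  refine ⟨P, hP, fun Ψ hΨ x => ?_⟩
  have hclose : ∀ s ∈ S, ∀ z : X, (Ψ.act s z, Φ.act s z) ∈ D := by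
    intro s hs z
    have hx := hword s hs
    have hfs : f s = hx.choose.length := dif_pos hx
    have hlen : hx.choose.length ≤ N := by
      rw [← hfs]
      exact Finset.le_sup (hS.1.mem_toFinset.mpr hs)
    have := hPprop Ψ hΨ hx.choose hx.choose_spec.1 hlen z
    rwa [hx.choose_spec.2] at this
  exact hDprop Ψ hclose x
end

section
/- Let X be a uniform space, μ a Borel measure on X, and Φ an action of a finitely generated group G on X. If Φ is μ-persistent with respect to one generating set S of G, then Φ is μ-persistent with respect to any other generating set T of G. -/
open Set MeasureTheory TopologicalSpace

/-- Any element of the subgroup generated by `T` has `Ψ`-action uniformly close to its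
`Φ`-action whenever the actions are close enough on `T`. -/
lemma word_close {G : Type*} [Group G] {X : Type*} [UniformSpace X]
    (Φ : UAction G X) (T : Set G) (g : G) (hg : g ∈ Subgroup.closure T) :
    ∀ D ∈ uniformity X, ∃ D' ∈ uniformity X,
      ∀ Ψ : UAction G X, (∀ t ∈ T, ∀ x : X, (Ψ.act t x, Φ.act t x) ∈ D') →
        ∀ x : X, (Ψ.act g x, Φ.act g x) ∈ D := by
  induction hg using Subgroup.closure_induction with
  | mem t ht =>
    intro D hD
    exact ⟨D, hD, fun Ψ hΨ x => hΨ t ht x⟩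
  | one =>
    intro D hD
    refine ⟨D, hD, fun Ψ _ x => ?_⟩
    rw [Ψ.act_one, Φ.act_one]
    exact refl_mem_uniformity hD
  | mul a b ha hb iha ihb =>
    intro D hD
    obtain ⟨D₁, hD₁, hcomp⟩ := comp_mem_uniformity_sets hD
    obtain ⟨Da, hDa, hA⟩ := iha D₁ hD₁
    have hcont : {p : X × X | (Φ.act a p.1, Φ.act a p.2) ∈ D₁} ∈ uniformity X :=
      (Φ.act a).uniformContinuous hD₁
    obtain ⟨Db, hDb, hB⟩ := ihb _ hcont
    refine ⟨Da ∩ Db, Filter.inter_mem hDa hDb, fun Ψ hΨ x => ?_⟩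
    have h1 : (Ψ.act a (Ψ.act b x), Φ.act a (Ψ.act b x)) ∈ D₁ :=
      hA Ψ (fun t ht x => (hΨ t ht x).1) _
    have h2 : (Φ.act a (Ψ.act b x), Φ.act a (Φ.act b x)) ∈ D₁ :=
      hB Ψ (fun t ht x => (hΨ t ht x).2) x
    rw [Ψ.act_mul, Φ.act_mul]
    exact hcomp ⟨_, h1, h2⟩
  | inv a ha iha =>
    intro D hD
    obtain ⟨D₀, hD₀, hsymm, hsub⟩ := symm_of_uniformity hD
    have hcont : {p : X × X | (Φ.act a⁻¹ p.1, Φ.act a⁻¹ p.2) ∈ D₀} ∈ uniformity X :=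
      (Φ.act a⁻¹).uniformContinuous hD₀
    obtain ⟨D', hD', hA⟩ := iha _ hcont
    refine ⟨D', hD', fun Ψ hΨ x => ?_⟩
    have h1 : (Ψ.act a (Ψ.act a⁻¹ x), Φ.act a (Ψ.act a⁻¹ x)) ∈
        {p : X × X | (Φ.act a⁻¹ p.1, Φ.act a⁻¹ p.2) ∈ D₀} := hA Ψ hΨ _
    have key : (Φ.act a⁻¹ (Ψ.act a (Ψ.act a⁻¹ x)), Φ.act a⁻¹ (Φ.act a (Ψ.act a⁻¹ x))) ∈ D₀ := h1
    have e1 : Ψ.act a (Ψ.act a⁻¹ x) = x := by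
      rw [← Ψ.act_mul, mul_inv_cancel, Ψ.act_one]
    have e2 : Φ.act a⁻¹ (Φ.act a (Ψ.act a⁻¹ x)) = Ψ.act a⁻¹ x := by
      rw [← Φ.act_mul, inv_mul_cancel, Φ.act_one]
    rw [e1, e2] at key
    exact hsub (SetRel.symm (R := D₀) key)

/-- `μ`-persistence is independent of the choice of finite symmetric generating set. -/
theorem muPersistent_indep_genSet {G : Type*} [Group G] {X : Type*} [UniformSpace X]
    [MeasurableSpace X] [BorelSpace X] (μ : Measure X)
    (Φ : UAction G X) (S T : Set G) (hS : IsGenSet S) (hT : IsGenSet T)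
    (h : MuPersistentWrt μ Φ S) : MuPersistentWrt μ Φ T := by
  intro E hE
  obtain ⟨D, hD, B, hBmeas, hBnull, hmain⟩ := h E hE
  -- every s ∈ S lies in the closure of T
  have hmemT : ∀ s ∈ S, s ∈ Subgroup.closure T := by
    intro s _
    rw [hT.2.2]; trivial
  choose D' hD'mem hD'close using
    fun (s : G) (hs : s ∈ S) => word_close Φ T s (hmemT s hs) D hD
  classical
  set F : G → Set (X × X) := fun s => if hs : s ∈ S then D' s hs else Set.univ with hF
  have hFmem : ∀ s : G, F s ∈ uniformity X := by
    intro s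
    by_cases hs : s ∈ S
    · simp [hF, hs, hD'mem s hs]
    · simp [hF, hs]
  -- intersect over the finite set S
  refine ⟨⋂ s ∈ hS.1.toFinset, F s, ?_, B, hBmeas, hBnull, ?_⟩
  · exact (Filter.biInter_finset_mem hS.1.toFinset).2 fun s _ => hFmem s
  · intro Ψ hΨ x hx
    refine hmain Ψ ?_ x hx
    intro s hs y
    refine hD'close s hs Ψ ?_ y
    intro t ht z
    have hm := hΨ t ht z
    simp only [Set.mem_iInter, Set.Finite.mem_toFinset] at hm
    have := hm s hs
    simpa [hF, hs] using this
end

section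
/- Let X be a first countable, locally compact, paracompact, Hausdorff uniform space. A map f : X → X is continuous if for every wide entourage U there exists an entourage V such that (f × f)(V) ⊂ U. -/
open Set MeasureTheory TopologicalSpace

/-- On a first countable, locally compact, paracompact, Hausdorff uniform space, a map
`f : X → X` is continuous provided that for every wide entourage `U` there is an entourage
`V` with `(f × f)(V) ⊆ U`. -/
theorem continuous_of_wide_entourages {X : Type*} [UniformSpace X]
    [FirstCountableTopology X] [LocallyCompactSpace X] [ParacompactSpace X] [T2Space X]
    (f : X → X)
    (h : ∀ U : Set (X × X), U ∈ uniformity X → WideEnt U →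
      ∃ V ∈ uniformity X, ∀ p : X × X, p ∈ V → (f p.1, f p.2) ∈ U) :
    Continuous f := by
  rw [continuous_iff_continuousAt]
  intro x₀
  rw [Uniform.continuousAt_iff'_right]
  intro W hW
  set U : Set (X × X) := W ∪ (({f x₀}ᶜ : Set X) ×ˢ (univ : Set X)) with hUdef
  have hU : U ∈ uniformity X := Filter.mem_of_superset hW subset_union_left
  have hwide : WideEnt U := by
    refine ⟨{f x₀}, isCompact_singleton, ?_⟩
    ext ⟨a, b⟩
    simp only [hUdef, mem_union, mem_prod, mem_singleton_iff, mem_univ, and_true, mem_compl_iff,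
      iff_true]
    by_cases ha : a = f x₀
    · exact Or.inr ha
    · exact Or.inl (Or.inr ha)
  obtain ⟨V, hV, hVf⟩ := h U hU hwide
  rw [Filter.mem_map]
  filter_upwards [mem_nhds_left x₀ hV] with y hy
  have := hVf (x₀, y) hy
  rcases this with hw | hk
  · exact hw
  · exact absurd rfl hk.1
end

section
/- Let X be a first countable, locally compact, paracompact, Hausdorff uniform space and let Φ be an action of a finitely generated group G on X with a proper expansive entourage A. For a non-empty finite set F ⊂ G, define V_F(A) = {(x, y) ∈ X × X : (Φ_g(x), Φ_g(y)) ∈ A for all g ∈ F}. Then for every wide entourage U there exists a non-empty finite set F ⊂ G such that V_F(A) ⊂ U. -/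
open Set MeasureTheory TopologicalSpace

lemma countable_of_group_fg {G : Type*} [Group G] [Group.FG G] : Countable G := by
  obtain ⟨S, hStop, hSfin⟩ := Group.fg_iff.mp ‹Group.FG G›
  set T : Set G := S ∪ S⁻¹ with hT
  have hTfin : T.Finite := hSfin.union hSfin.inv
  have : Countable T := hTfin.countable.to_subtype
  have hsurj : Function.Surjective (fun l : List T => (l.map Subtype.val).prod) := by
    intro g
    have hg : g ∈ Submonoid.closure T := by
      have h1 : g ∈ (Subgroup.closure S).toSubmonoid := by
        rw [hStop]; trivial
      rwa [Subgroup.closure_toSubmonoid] at h1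
    obtain ⟨l, hl, hprod⟩ := Submonoid.exists_list_of_mem_closure hg
    refine ⟨l.attach.map (fun x => (⟨x.1, hl x.1 x.2⟩ : T)), ?_⟩
    simp only [List.map_map]
    simpa using hprod

  exact hsurj.countable

/-- If `A` is a proper expansive entourage for `Φ`, then for every wide entourage `U` there is
a non-empty finite set `F ⊆ G` with `V_F(A) ⊆ U`. -/
theorem exists_finset_VF_subset {G : Type*} [Group G] [Group.FG G]
    {X : Type*} [UniformSpace X] [FirstCountableTopology X] [LocallyCompactSpace X]
    [ParacompactSpace X] [T2Space X]
    (Φ : UAction G X) (A : Set (X × X))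
    (hA : IsExpansiveEnt Φ A) (hAproper : ProperEnt A)
    (U : Set (X × X)) (hU : U ∈ uniformity X) (hUwide : WideEnt U) :
    ∃ F : Finset G, F.Nonempty ∧
      ∀ x y : X, (∀ g ∈ F, (Φ.act g x, Φ.act g y) ∈ A) → (x, y) ∈ U := by
  by_contra hcon
  push_neg at hcon
  have hGcount : Countable G := countable_of_group_fg
  have : Nonempty G := ⟨1⟩
  classical
  obtain ⟨K, hK, hKU⟩ := hUwide
  obtain ⟨hAu, hAclosed, hAexp⟩ := hA
  obtain ⟨e, he⟩ := exists_surjective_nat G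
  set F : ℕ → Finset G := fun n => insert 1 ((Finset.range (n+1)).image e) with hFdef
  have hF1 : ∀ n, (1:G) ∈ F n := fun n => Finset.mem_insert_self _ _
  have hFmem : ∀ g : G, ∃ m : ℕ, ∀ n ≥ m, g ∈ F n := by
    intro g
    obtain ⟨m, rfl⟩ := he g
    exact ⟨m, fun n hn => Finset.mem_insert_of_mem
      (Finset.mem_image.2 ⟨m, Finset.mem_range.2 (Nat.lt_succ_of_le hn), rfl⟩)⟩
  choose x y hxy hnotU using fun n => hcon (F n) ⟨1, hF1 n⟩
  have hxK : ∀ n, x n ∈ K := by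
    intro n
    have h1 : (x n, y n) ∈ U ∪ K ×ˢ (univ : Set X) := hKU ▸ mem_univ _
    rcases h1 with h | h
    · exact absurd h (hnotU n)
    · exact h.1
  set L : Set X := {z : X | ∃ w ∈ K, (w, z) ∈ A} with hLdef
  have hL : IsCompact L := hAproper K hK
  have hyL : ∀ n, y n ∈ L := by
    intro n
    have h1 := hxy n 1 (hF1 n)
    rw [Φ.act_one, Φ.act_one] at h1
    exact ⟨x n, hxK n, h1⟩
  obtain ⟨p, -, φ, hφ, hxp⟩ := hK.tendsto_subseq hxK
  obtain ⟨q, -, ψ, hψ, hyq⟩ := hL.tendsto_subseq (fun k => hyL (φ k))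
  have hxp' : Filter.Tendsto (fun k => x (φ (ψ k))) Filter.atTop (nhds p) :=
    hxp.comp hψ.tendsto_atTop
  have hall : ∀ g : G, (Φ.act g p, Φ.act g q) ∈ A := by
    intro g
    obtain ⟨m, hm⟩ := hFmem g
    have hcg : Continuous (Φ.act g) := (Φ.act g).continuous
    have hlim : Filter.Tendsto
        (fun k => (Φ.act g (x (φ (ψ k))), Φ.act g (y (φ (ψ k))))) Filter.atTop
        (nhds (Φ.act g p, Φ.act g q)) :=
      ((hcg.tendsto p).comp hxp').prodMk_nhds ((hcg.tendsto q).comp hyq)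
    refine hAclosed.mem_of_tendsto hlim ?_
    filter_upwards [Filter.eventually_ge_atTop m] with k hk
    exact hxy (φ (ψ k)) g (hm _ (le_trans hk ((hφ.comp hψ).id_le k)))
  have hpq : p = q := by
    by_contra hne
    obtain ⟨g, hg⟩ := hAexp p q hne
    exact hg (hall g)
  subst hpq
  have hUn : U ∈ nhds (p, p) := nhds_le_uniformity p hU
  have hfin : ∀ᶠ k in Filter.atTop, (x (φ (ψ k)), y (φ (ψ k))) ∈ U :=
    (hxp'.prodMk_nhds hyq).eventually_mem hUn
  obtain ⟨k, hk⟩ := hfin.exists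
  exact hnotU _ hk
end

section
/- Let X be a uniform space and let Φ be an action of a finitely generated group G on X. If Φ is topologically stable, then Φ is μ-topologically stable for any non-atomic Borel measure μ on X. -/
open Set MeasureTheory TopologicalSpace

/-- A topologically stable action is `μ`-topologically stable for every non-atomic Borel
measure `μ`. -/
theorem muTopStable_of_topStable {G : Type*} [Group G] {X : Type*} [UniformSpace X]
    [MeasurableSpace X] [BorelSpace X]
    (Φ : UAction G X) (h : ∃ S : Set G, IsGenSet S ∧ TopStableWrt Φ S) :
    ∀ μ : Measure X, (∀ x : X, μ {x} = 0) →
      ∃ S : Set G, IsGenSet S ∧ MuTopStableWrt μ Φ S := by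
  intro μ hμ
  obtain ⟨S, hS, hTS⟩ := h
  refine ⟨S, hS, ?_⟩
  intro E hE
  obtain ⟨D, hD, hDst⟩ := hTS E hE
  refine ⟨D, hD, ?_⟩
  intro Ψ hΨ
  obtain ⟨f, hf, hcomm, hfE⟩ := hDst Ψ hΨ
  refine ⟨fun x => {f x}, ?_, fun x => isCompact_singleton, ?_, ?_, ?_, ?_, ?_⟩
  · intro x _ O hO hsub
    have : O ∈ nhds (f x) := hO.mem_nhds (hsub rfl)
    have : f ⁻¹' O ∈ nhds x := hf.continuousAt this
    rw [UniformSpace.mem_nhds_iff] at this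
    obtain ⟨V, hV, hball⟩ := this
    exact ⟨V, hV, fun y hy z hz => hz ▸ hball hy⟩
  · have : {x : X | ({f x} : Set X).Nonempty} = univ := by
      ext x; simp
    rw [this]; exact MeasurableSet.univ
  · have : {x : X | ({f x} : Set X).Nonempty} = univ := by
      ext x; simp
    rw [this]; simp
  · intro x; exact hμ (f x)
  · intro x y hy; rw [Set.mem_singleton_iff] at hy; exact hy ▸ hfE x
  · intro g x; rw [Set.image_singleton, hcomm]
end

section
/- Let Φ be an action of a finitely generated group G on a uniform space X and Ψ an action of G on a uniform space Y, and suppose Φ and Ψ are uniformly conjugate. Then Φ has shadowing if and only if Ψ has shadowing. -/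
open Set MeasureTheory TopologicalSpace

lemma hasShadowingWrt_of_conj {G : Type*} [Group G]
    {X : Type*} [UniformSpace X] {Y : Type*} [UniformSpace Y]
    (Φ : UAction G X) (Ψ : UAction G Y) (h : X ≃ᵤ Y)
    (hc : ∀ (g : G) (x : X), h (Φ.act g x) = Ψ.act g (h x))
    {S : Set G} (hS : HasShadowingWrt Φ S) : HasShadowingWrt Ψ S := by
  intro E hE
  -- pull back E through h
  have hE' : Prod.map h h ⁻¹' E ∈ uniformity X := h.uniformContinuous hE
  obtain ⟨D, hD, hDsh⟩ := hS _ hE'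
  refine ⟨Prod.map h.symm h.symm ⁻¹' D, h.symm.uniformContinuous hD, ?_⟩
  intro y hy
  have hpo : IsPseudoOrbit Φ S D (fun g => h.symm (y g)) := by
    intro s hs g
    have hyg := hy s hs g
    have heq : h.symm (Ψ.act s (y g)) = Φ.act s (h.symm (y g)) := by
      have := hc s (h.symm (y g))
      simp only [UniformEquiv.apply_symm_apply] at this
      exact (h.symm_apply_eq.mpr this.symm)
    simpa only [← heq, Set.mem_preimage, Prod.map_apply] using hyg
  obtain ⟨p, hp⟩ := hDsh _ hpo
  refine ⟨h p, fun g => ?_⟩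
  have hpg := hp g
  simp only [Set.mem_preimage, Prod.map_apply] at hpg
  rw [hc] at hpg
  simpa using hpg

/-- Shadowing is invariant under uniform conjugacy. -/
theorem shadowing_iff_of_uniformlyConjugate {G : Type*} [Group G]
    {X : Type*} [UniformSpace X] {Y : Type*} [UniformSpace Y]
    (Φ : UAction G X) (Ψ : UAction G Y) (hconj : UniformlyConjugate Φ Ψ) :
    (∃ S : Set G, IsGenSet S ∧ HasShadowingWrt Φ S) ↔
      (∃ S : Set G, IsGenSet S ∧ HasShadowingWrt Ψ S) := by
  obtain ⟨h, hc⟩ := hconj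
  have hc' : ∀ (g : G) (y : Y), h.symm (Ψ.act g y) = Φ.act g (h.symm y) := by
    intro g y
    have := hc g (h.symm y)
    simp only [UniformEquiv.apply_symm_apply] at this
    exact h.symm_apply_eq.mpr this.symm
  constructor
  · rintro ⟨S, hS, hsh⟩
    exact ⟨S, hS, hasShadowingWrt_of_conj Φ Ψ h hc hsh⟩
  · rintro ⟨S, hS, hsh⟩
    exact ⟨S, hS, hasShadowingWrt_of_conj Ψ Φ h.symm hc' hsh⟩
end

section
/- Let Φ be an action of a finitely generated group G on a uniform space X and Ψ an action of G on a uniform space Y, uniformly conjugate via a uniform equivalence h : X → Y, and let μ be a Borel measure on X. If Φ is μ-expansive, then Ψ is h*(μ)-expansive, where h*(μ) is the pushforward measure defined by h*(μ)(A) = μ(h⁻¹(A)) for all Borel sets A ⊂ Y. -/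
open Set MeasureTheory TopologicalSpace

/-- If `Φ` is `μ`-expansive and `h` is a uniform conjugacy from `Φ` to `Ψ`, then `Ψ` is
expansive with respect to the pushforward measure `h*(μ)`. -/
theorem muExpansive_map_of_uniformlyConjugate {G : Type*} [Group G]
    {X : Type*} [UniformSpace X] [MeasurableSpace X] [BorelSpace X]
    {Y : Type*} [UniformSpace Y] [MeasurableSpace Y] [BorelSpace Y]
    (Φ : UAction G X) (Ψ : UAction G Y) (μ : Measure X)
    (h : X ≃ᵤ Y) (hconj : ∀ (g : G) (x : X), h (Φ.act g x) = Ψ.act g (h x))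
    (hexp : MuExpansive μ Φ) :
    MuExpansive (Measure.map (⇑h) μ) Ψ := by
  obtain ⟨D, hDu, hDc, hDg⟩ := hexp
  refine ⟨(Prod.map h.symm h.symm) ⁻¹' D, ?_, ?_, ?_⟩
  · exact h.symm.uniformContinuous hDu
  · exact hDc.preimage (h.symm.continuous.prodMap h.symm.continuous)
  · intro y
    have hset : GammaSet Ψ ((Prod.map h.symm h.symm) ⁻¹' D) y
        = (⇑h.symm) ⁻¹' GammaSet Φ D (h.symm y) := by
      ext z
      simp only [GammaSet, Set.mem_setOf_eq, Set.mem_preimage, Prod.map]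
      constructor
      · intro hz g
        have := hz g
        have e1 : h.symm (Ψ.act g y) = Φ.act g (h.symm y) := by
          have := congrArg h.symm (hconj g (h.symm y)).symm
          rwa [h.apply_symm_apply, h.symm_apply_apply] at this
        have e2 : h.symm (Ψ.act g z) = Φ.act g (h.symm z) := by
          have := congrArg h.symm (hconj g (h.symm z)).symm
          rwa [h.apply_symm_apply, h.symm_apply_apply] at this
        rwa [e1, e2] at this
      · intro hz g
        have := hz g
        have e1 : h.symm (Ψ.act g y) = Φ.act g (h.symm y) := by
          have := congrArg h.symm (hconj g (h.symm y)).symm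
          rwa [h.apply_symm_apply, h.symm_apply_apply] at this
        have e2 : h.symm (Ψ.act g z) = Φ.act g (h.symm z) := by
          have := congrArg h.symm (hconj g (h.symm z)).symm
          rwa [h.apply_symm_apply, h.symm_apply_apply] at this
        show (h.symm (Ψ.act g y), h.symm (Ψ.act g z)) ∈ D
        rw [e1, e2]; exact this
    have hGclosed : IsClosed (GammaSet Φ D (h.symm y)) := by
      have : GammaSet Φ D (h.symm y)
          = ⋂ g : G, (fun z => (Φ.act g (h.symm y), Φ.act g z)) ⁻¹' D := by
        ext z; simp [GammaSet]
      rw [this]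
      exact isClosed_iInter fun g =>
        hDc.preimage (by exact (continuous_const.prodMk (Φ.act g).continuous))
    have hmeas : MeasurableSet ((⇑h.symm) ⁻¹' GammaSet Φ D (h.symm y)) :=
      (hGclosed.preimage h.symm.continuous).measurableSet
    rw [hset, Measure.map_apply h.continuous.measurable hmeas]
    have : (⇑h) ⁻¹' ((⇑h.symm) ⁻¹' GammaSet Φ D (h.symm y))
        = GammaSet Φ D (h.symm y) := by
      ext z; simp [Set.mem_preimage]
    rw [this]
    exact hDg _
end
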